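/- Let V be a real vector space of finite dimension n and ω : V × V → V* an alternating bilinear map. Write ω = ω₊ + ω₋ where ω₋(X,Y)(Z) = (1/3)(ω(X,Y)(Z) + ω(Y,Z)(X) + ω(Z,X)(Y)) is the totally alternating part and ω₊ = ω − ω₋. Define Θ(X,Y,W) ∈ End(V) by Θ(X,Y,W)Z = ω(X,Y)(W)Z + ω(X,Y)(Z)W + ω(Y,W)(X)Z + ω(Y,W)(Z)X + ω(W,X)(Y)Z + ω(W,X)(Z)Y. Then for all X,Y,Z ∈ V, Tr(W ↦ Θ(X,Y,W)Z) = (n−2)·ω₊(X,Y)(Z) + (n+1)·ω₋(X,Y)(Z). -/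

import Mathlib

open LinearMap Module

/-- For an alternating bilinear map `ω : V × V → V*`, the endomorphism-valued expression
`Θ(X,Y,W) : Z ↦ ω(X,Y)(W)Z + ω(X,Y)(Z)W + ω(Y,W)(X)Z + ω(Y,W)(Z)X + ω(W,X)(Y)Z + ω(W,X)(Z)Y`,
here bundled (for fixed `X, Y, Z`) as the linear map `W ↦ Θ(X,Y,W)Z`. -/
noncomputable def thetaMap {V : Type*} [AddCommGroup V] [Module ℝ V]
    (ω : V →ₗ[ℝ] V →ₗ[ℝ] (V →ₗ[ℝ] ℝ)) (X Y Z : V) : V →ₗ[ℝ] V :=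
  LinearMap.smulRight (ω X Y) Z
    + ω X Y Z • LinearMap.id
    + LinearMap.smulRight ((LinearMap.applyₗ X).comp (ω Y)) Z
    + LinearMap.smulRight ((LinearMap.applyₗ Z).comp (ω Y)) X
    + LinearMap.smulRight ((LinearMap.applyₗ Y).comp (ω.flip X)) Z
    + LinearMap.smulRight ((LinearMap.applyₗ Z).comp (ω.flip X)) Y

/-! Apart from `ω(X,Y)(Z) • id`, every summand of `W ↦ Θ(X,Y,W)Z` has rank one, `W ↦ f(W) v`,
with trace `f(v)`. Skew-symmetry in the first two slots turns the two resulting terms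
`ω(Y,X)(Z)` into `-ω(X,Y)(Z)`, and what is left is `(n - 1) ω(X,Y)(Z)` plus the two other
cyclic permutations, which is the claimed combination of `ω₊` and `ω₋`. -/

theorem trace_thetaMap {V : Type*} [AddCommGroup V] [Module ℝ V] [FiniteDimensional ℝ V]
    (ω : V →ₗ[ℝ] V →ₗ[ℝ] (V →ₗ[ℝ] ℝ)) (X Y Z : V) :
    trace ℝ V (thetaMap ω X Y Z) =
      (finrank ℝ V + 1) * ω X Y Z + ω Y Z X + ω Z X Y + 2 * ω Y X Z := by
  simp only [thetaMap, map_add, map_smul, trace_smulRight, trace_id, smul_eq_mul, comp_apply,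
    applyₗ_apply_apply, flip_apply]
  ring

/-- For `dim V = n` and an alternating `ω : V × V → V*` with totally alternating part
`ω₋(X,Y)(Z) = (1/3)(ω(X,Y)(Z) + ω(Y,Z)(X) + ω(Z,X)(Y))` and `ω₊ = ω − ω₋`, one has
`Tr(W ↦ Θ(X,Y,W)Z) = (n−2)·ω₊(X,Y)(Z) + (n+1)·ω₋(X,Y)(Z)`. -/
theorem theta_trace {V : Type*} [AddCommGroup V] [Module ℝ V] [FiniteDimensional ℝ V]
    (n : ℕ) (hn : n = Module.finrank ℝ V)
    (ω : V →ₗ[ℝ] V →ₗ[ℝ] (V →ₗ[ℝ] ℝ))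
    (halt : ∀ X : V, ω X X = 0) :
    ∀ X Y Z : V,
      LinearMap.trace ℝ V (thetaMap ω X Y Z) =
        ((n : ℝ) - 2) * (ω X Y Z - (1 / 3) * (ω X Y Z + ω Y Z X + ω Z X Y)) +
        ((n : ℝ) + 1) * ((1 / 3) * (ω X Y Z + ω Y Z X + ω Z X Y)) := by
  intro X Y Z
  have hskew : ω Y X Z = -ω X Y Z := by
    rw [← IsAlt.neg (B := ω) halt X Y, LinearMap.neg_apply]
  rw [trace_thetaMap, hskew, ← hn]
  ring
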